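/- Let $n \ge 1$ and let $a_1, a_2 \in \mathbb{R}$ satisfy $a_1 < 0$, $a_2 < 0$ and $a_1 + a_2 = -n/2$. Then there exists a constant $C > 0$ such that for all nonnegative functions $A_1, A_2$ on $\mathbb{Z}^n$, $\left( \sum_{\mu \in \mathbb{Z}^n} \Big( \sum_{\nu_1 + \nu_2 = \mu} \langle \nu_1 \rangle^{a_1} \langle \nu_2 \rangle^{a_2} A_1(\nu_1) A_2(\nu_2) \Big)^2 \right)^{1/2} \le C \|A_1\|_{\ell^2(\mathbb{Z}^n)} \|A_2\|_{\ell^2(\mathbb{Z}^n)}$. -/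

import Mathlib

/-!
Split the sum over `ν` according to whether `⟨ν⟩ ≤ ⟨μ - ν⟩` or not. On the first part,
Cauchy–Schwarz in `ν` against `A₁`, followed by the substitution `η = μ - ν`, bounds the square
of the left-hand side by `‖A₁‖² ‖A₂‖² sup_η ⟨η⟩^(2a₂) ∑_{⟨ν⟩ ≤ ⟨η⟩} ⟨ν⟩^(2a₁)`; the second
part is symmetric. Since `2a₁ > -n`, the lattice sum `∑_{⟨ν⟩² ≤ R} ⟨ν⟩^(2a₁)` is
`O(R^(a₁ + n/2))`: passing from `R / 2` to `R` adds the shell `R / 2 < ⟨ν⟩² ≤ R`, which has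
`O(R^(n/2))` points of weight at most `(R / 2)^a₁`, and these increments form a geometric series.
As `a₁ + a₂ = -n/2`, the supremum is finite.
-/

open scoped ENNReal

/-- The Japanese-bracket weight `⟨ν⟩^a = (1+|ν|²)^(a/2)` for `ν ∈ ℤⁿ`, as an `ℝ≥0∞`. -/
noncomputable def jweight (n : ℕ) (a : ℝ) (ν : Fin n → ℤ) : ℝ≥0∞ :=
  ENNReal.ofReal ((1 + ∑ i, ((ν i : ℝ)) ^ 2) ^ (a / 2))

theorem ENNReal.tsum_mul_sq_le {ι : Type*} (f g : ι → ℝ≥0∞) :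
    (∑' i, f i * g i) ^ 2 ≤ (∑' i, f i ^ 2) * ∑' i, g i ^ 2 := by
  have hsq (x : ℝ≥0∞) : (x ^ (1 / 2 : ℝ)) ^ 2 = x := by
    rw [← ENNReal.rpow_natCast, ← ENNReal.rpow_mul]; norm_num
  have holder : ∑' i, f i * g i ≤
      (∑' i, f i ^ 2) ^ (1 / 2 : ℝ) * (∑' i, g i ^ 2) ^ (1 / 2 : ℝ) := by
    rw [ENNReal.tsum_eq_iSup_sum]
    refine iSup_le fun s => (ENNReal.inner_le_Lp_mul_Lq s f g .two_two).trans ?_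
    gcongr <;> simpa only [ENNReal.rpow_two] using ENNReal.sum_le_tsum s
  calc (∑' i, f i * g i) ^ 2
      ≤ ((∑' i, f i ^ 2) ^ (1 / 2 : ℝ) * (∑' i, g i ^ 2) ^ (1 / 2 : ℝ)) ^ 2 := by gcongr
    _ = _ := by rw [mul_pow, hsq, hsq]

theorem ENNReal.add_sq_le (a b : ℝ≥0∞) : (a + b) ^ 2 ≤ 2 * (a ^ 2 + b ^ 2) := by
  rcases eq_or_ne a ⊤ with rfl | ha
  · simp
  rcases eq_or_ne b ⊤ with rfl | hb
  · simp
  lift a to NNReal using ha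
  lift b to NNReal using hb
  exact_mod_cast _root_.add_sq_le (a := a) (b := b)

section KernelConv

variable {G : Type*} [AddCommGroup G]

noncomputable def kernelConv (k : G → G → ℝ≥0∞) (A₁ A₂ : G → ℝ≥0∞) (μ : G) : ℝ≥0∞ :=
  ∑' ν, k ν (μ - ν) * A₁ ν * A₂ (μ - ν)

theorem kernelConv_swap (k : G → G → ℝ≥0∞) (A₁ A₂ : G → ℝ≥0∞) :
    kernelConv k A₁ A₂ = kernelConv (fun ν η => k η ν) A₂ A₁ := by
  ext μ
  rw [kernelConv, ← (Equiv.subLeft μ).tsum_eq]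
  simp only [kernelConv, Equiv.subLeft_apply, sub_sub_cancel]
  exact tsum_congr fun ν => by ring

theorem kernelConv_le_add {k k₁ k₂ : G → G → ℝ≥0∞} (hk : k ≤ k₁ + k₂) (A₁ A₂ : G → ℝ≥0∞) :
    kernelConv k A₁ A₂ ≤ kernelConv k₁ A₁ A₂ + kernelConv k₂ A₁ A₂ := fun μ => by
  simp only [kernelConv, Pi.add_apply, ← ENNReal.tsum_add, ← add_mul]
  gcongr with ν
  exact hk _ _

theorem tsum_sq_kernelConv_le_of_tsum_fst (k : G → G → ℝ≥0∞) {C : ℝ≥0∞}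
    (hk : ∀ η, ∑' ν, k ν η ^ 2 ≤ C) (A₁ A₂ : G → ℝ≥0∞) :
    ∑' μ, kernelConv k A₁ A₂ μ ^ 2 ≤ C * (∑' ν, A₁ ν ^ 2) * ∑' η, A₂ η ^ 2 := by
  calc ∑' μ, kernelConv k A₁ A₂ μ ^ 2
      ≤ ∑' μ, (∑' ν, A₁ ν ^ 2) * ∑' ν, (k ν (μ - ν) * A₂ (μ - ν)) ^ 2 := by
        gcongr with μ
        have hμ : kernelConv k A₁ A₂ μ = ∑' ν, A₁ ν * (k ν (μ - ν) * A₂ (μ - ν)) :=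
          tsum_congr fun ν => by ring
        exact hμ ▸ ENNReal.tsum_mul_sq_le _ _
    _ = (∑' ν, A₁ ν ^ 2) * ∑' η, (∑' ν, k ν η ^ 2) * A₂ η ^ 2 := by
        rw [ENNReal.tsum_mul_left]
        congr 1
        calc ∑' μ, ∑' ν, (k ν (μ - ν) * A₂ (μ - ν)) ^ 2
            = ∑' ν, ∑' μ, (k ν (μ - ν) * A₂ (μ - ν)) ^ 2 := ENNReal.tsum_comm
          _ = ∑' ν, ∑' η, k ν η ^ 2 * A₂ η ^ 2 := tsum_congr fun ν => by
              rw [← (Equiv.addRight ν).tsum_eq]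
              simp [mul_pow]
          _ = _ := by rw [ENNReal.tsum_comm]; simp_rw [ENNReal.tsum_mul_right]
    _ ≤ (∑' ν, A₁ ν ^ 2) * ∑' η, C * A₂ η ^ 2 := by gcongr with η; exact hk η
    _ = _ := by rw [ENNReal.tsum_mul_left]; ring

theorem tsum_sq_kernelConv_le_of_tsum_snd (k : G → G → ℝ≥0∞) {C : ℝ≥0∞}
    (hk : ∀ ν, ∑' η, k ν η ^ 2 ≤ C) (A₁ A₂ : G → ℝ≥0∞) :
    ∑' μ, kernelConv k A₁ A₂ μ ^ 2 ≤ C * (∑' ν, A₁ ν ^ 2) * ∑' η, A₂ η ^ 2 := by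
  rw [kernelConv_swap, mul_right_comm]
  exact tsum_sq_kernelConv_le_of_tsum_fst _ hk A₂ A₁

theorem tsum_sq_kernelConv_le {k k₁ k₂ : G → G → ℝ≥0∞} (hk : k ≤ k₁ + k₂) {C₁ C₂ : ℝ≥0∞}
    (hk₁ : ∀ η, ∑' ν, k₁ ν η ^ 2 ≤ C₁) (hk₂ : ∀ ν, ∑' η, k₂ ν η ^ 2 ≤ C₂)
    (A₁ A₂ : G → ℝ≥0∞) :
    ∑' μ, kernelConv k A₁ A₂ μ ^ 2 ≤ 2 * (C₁ + C₂) * (∑' ν, A₁ ν ^ 2) * ∑' η, A₂ η ^ 2 := by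
  calc ∑' μ, kernelConv k A₁ A₂ μ ^ 2
      ≤ ∑' μ, 2 * (kernelConv k₁ A₁ A₂ μ ^ 2 + kernelConv k₂ A₁ A₂ μ ^ 2) := by
        gcongr with μ
        exact (pow_le_pow_left₀ zero_le (kernelConv_le_add hk A₁ A₂ μ) 2).trans
          (ENNReal.add_sq_le _ _)
    _ = 2 * (∑' μ, kernelConv k₁ A₁ A₂ μ ^ 2 + ∑' μ, kernelConv k₂ A₁ A₂ μ ^ 2) := by
        rw [ENNReal.tsum_mul_left, ENNReal.tsum_add]
    _ ≤ 2 * (C₁ * (∑' ν, A₁ ν ^ 2) * (∑' η, A₂ η ^ 2) +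
          C₂ * (∑' ν, A₁ ν ^ 2) * ∑' η, A₂ η ^ 2) := by
        gcongr
        · exact tsum_sq_kernelConv_le_of_tsum_fst k₁ hk₁ A₁ A₂
        · exact tsum_sq_kernelConv_le_of_tsum_snd k₂ hk₂ A₁ A₂
    _ = _ := by ring

end KernelConv

noncomputable def bracketSq (n : ℕ) (ν : Fin n → ℤ) : ℝ := 1 + ∑ i, (ν i : ℝ) ^ 2

theorem one_le_bracketSq (n : ℕ) (ν : Fin n → ℤ) : 1 ≤ bracketSq n ν :=
  le_add_of_nonneg_right (Finset.sum_nonneg fun _ _ => sq_nonneg _)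

theorem jweight_sq (n : ℕ) (a : ℝ) (ν : Fin n → ℤ) :
    jweight n a ν ^ 2 = ENNReal.ofReal (bracketSq n ν ^ a) := by
  have hQ : 0 ≤ bracketSq n ν := zero_le_one.trans (one_le_bracketSq n ν)
  change ENNReal.ofReal (bracketSq n ν ^ (a / 2)) ^ 2 = _
  rw [← ENNReal.ofReal_pow (by positivity), ← Real.rpow_mul_natCast hQ]
  norm_num

theorem natAbs_le_floor_sqrt_of_bracketSq_le {n : ℕ} {ν : Fin n → ℤ} {R : ℝ}
    (h : bracketSq n ν ≤ R) (i : Fin n) : (ν i).natAbs ≤ ⌊√R⌋₊ := by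
  have hsq : (ν i : ℝ) ^ 2 ≤ R :=
    calc (ν i : ℝ) ^ 2 ≤ ∑ j, (ν j : ℝ) ^ 2 :=
          Finset.single_le_sum (f := fun j => (ν j : ℝ) ^ 2) (fun _ _ => sq_nonneg _)
            (Finset.mem_univ i)
      _ ≤ R := by unfold bracketSq at h; linarith
  refine Nat.le_floor ?_
  rw [Nat.cast_natAbs, Int.cast_abs]
  exact Real.abs_le_sqrt hsq

theorem tsum_ite_bracketSq_le_one_le (n : ℕ) (R : ℝ) :
    ∑' ν : Fin n → ℤ, (if bracketSq n ν ≤ R then (1 : ℝ≥0∞) else 0)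
      ≤ ENNReal.ofReal (3 ^ n * R ^ ((n : ℝ) / 2)) := by
  rcases lt_or_ge R 1 with hR | hR
  · simp [fun ν => (hR.trans_le (one_le_bracketSq n ν)).not_ge]
  set m := ⌊√R⌋₊
  set box : Finset (Fin n → ℤ) := Fintype.piFinset fun _ => Finset.Icc (-(m : ℤ)) m
  have h_box : ∀ ν, bracketSq n ν ≤ R → ν ∈ box := fun ν hν => by
    simp only [box, Fintype.mem_piFinset, Finset.mem_Icc]
    intro i
    have := natAbs_le_floor_sqrt_of_bracketSq_le hν i
    omega
  have h_card : box.card = (2 * m + 1) ^ n := by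
    simp only [box, Fintype.card_piFinset, Int.card_Icc, Finset.prod_const, Finset.card_univ,
      Fintype.card_fin]
    congr 1; omega
  have h_sqrt : 1 ≤ √R := Real.one_le_sqrt.2 hR
  have h_m : (m : ℝ) ≤ √R := Nat.floor_le (Real.sqrt_nonneg R)
  calc ∑' ν : Fin n → ℤ, (if bracketSq n ν ≤ R then (1 : ℝ≥0∞) else 0)
      = ∑ ν ∈ box, (if bracketSq n ν ≤ R then (1 : ℝ≥0∞) else 0) :=
        tsum_eq_sum fun ν hν => if_neg fun h => hν (h_box ν h)
    _ ≤ box.card := by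
        rw [Finset.card_eq_sum_ones, Nat.cast_sum, Nat.cast_one]
        exact Finset.sum_le_sum fun _ _ => ite_le_one le_rfl zero_le_one
    _ = ENNReal.ofReal (((2 * m + 1 : ℕ) : ℝ) ^ n) := by
        rw [h_card, ← ENNReal.ofReal_natCast, Nat.cast_pow]
    _ ≤ ENNReal.ofReal ((3 * √R) ^ n) := by
        gcongr; push_cast; linarith
    _ = ENNReal.ofReal (3 ^ n * R ^ ((n : ℝ) / 2)) := by
        rw [mul_pow, Real.sqrt_eq_rpow, ← Real.rpow_mul_natCast (by linarith)]
        ring_nf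

theorem le_ofReal_mul_rpow_of_le_half_add {S : ℝ → ℝ≥0∞} {K p : ℝ} (hK : 0 ≤ K) (hp : 0 < p)
    (h_lt_one : ∀ R < 1, S R = 0)
    (h_half : ∀ R, 1 ≤ R → S R ≤ S (R / 2) + ENNReal.ofReal (K * R ^ p)) (R : ℝ) :
    S R ≤ ENNReal.ofReal (K / (1 - 2 ^ (-p)) * R ^ p) := by
  have h2p : (2 : ℝ) ^ (-p) < 1 := Real.rpow_lt_one_of_one_lt_of_neg one_lt_two (neg_neg_of_pos hp)
  set D := K / (1 - 2 ^ (-p))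
  have hD : 0 ≤ D := div_nonneg hK (sub_nonneg.2 h2p.le)
  have hD_eq : D * 2 ^ (-p) + K = D := by
    have hne : 1 - (2 : ℝ) ^ (-p) ≠ 0 := (sub_pos.2 h2p).ne'
    simp only [D]; field_simp; ring
  suffices ∀ j : ℕ, ∀ R < (2 : ℝ) ^ j, S R ≤ ENNReal.ofReal (D * R ^ p) from
    this _ R (pow_unbounded_of_one_lt R one_lt_two).choose_spec
  intro j
  induction j with
  | zero => intro R hR; simp [h_lt_one R (by simpa using hR)]
  | succ j ih =>
    intro R hR
    rcases lt_or_ge R 1 with hR1 | hR1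
    · simp [h_lt_one R hR1]
    have hR0 : 0 < R := one_pos.trans_le hR1
    calc S R ≤ S (R / 2) + ENNReal.ofReal (K * R ^ p) := h_half R hR1
      _ ≤ ENNReal.ofReal (D * (R / 2) ^ p) + ENNReal.ofReal (K * R ^ p) := by
          gcongr; exact ih _ (by rw [pow_succ] at hR; linarith)
      _ = ENNReal.ofReal (D * R ^ p) := by
          rw [← ENNReal.ofReal_add (by positivity) (by positivity)]
          congr 1
          rw [Real.div_rpow hR0.le zero_le_two, div_eq_mul_inv, ← Real.rpow_neg zero_le_two]
          linear_combination R ^ p * hD_eq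

theorem exists_tsum_ite_bracketSq_rpow_le (n : ℕ) {c : ℝ} (hc : c ≤ 0) (hcn : 0 < c + n / 2) :
    ∃ D : ℝ, 0 < D ∧ ∀ R, ∑' ν : Fin n → ℤ,
      (if bracketSq n ν ≤ R then ENNReal.ofReal (bracketSq n ν ^ c) else 0)
        ≤ ENNReal.ofReal (D * R ^ (c + n / 2)) := by
  set K : ℝ := 3 ^ n * 2 ^ (-c)
  have h2p : (2 : ℝ) ^ (-(c + n / 2)) < 1 :=
    Real.rpow_lt_one_of_one_lt_of_neg one_lt_two (neg_neg_of_pos hcn)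
  refine ⟨K / (1 - 2 ^ (-(c + n / 2))), div_pos (by positivity) (sub_pos.2 h2p),
    le_ofReal_mul_rpow_of_le_half_add (by positivity) hcn ?_ ?_⟩
  · intro R hR
    exact ENNReal.tsum_eq_zero.2 fun ν => if_neg (hR.trans_le (one_le_bracketSq n ν)).not_ge
  intro R hR
  have hR2 : 0 < R / 2 := by linarith
  have h_shell : ∀ ν : Fin n → ℤ,
      (if bracketSq n ν ≤ R then ENNReal.ofReal (bracketSq n ν ^ c) else 0)
        ≤ (if bracketSq n ν ≤ R / 2 then ENNReal.ofReal (bracketSq n ν ^ c) else 0)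
          + ENNReal.ofReal ((R / 2) ^ c) * (if bracketSq n ν ≤ R then 1 else 0) := fun ν => by
    split_ifs with h h'
    · exact le_self_add
    · rw [mul_one, zero_add]
      exact ENNReal.ofReal_le_ofReal (Real.rpow_le_rpow_of_nonpos hR2 (not_le.1 h').le hc)
    all_goals exact zero_le
  calc _ ≤ _ := ENNReal.tsum_le_tsum h_shell
    _ = _ + ENNReal.ofReal ((R / 2) ^ c) * _ := by
        rw [ENNReal.tsum_add, ENNReal.tsum_mul_left]
    _ ≤ _ + ENNReal.ofReal ((R / 2) ^ c) * ENNReal.ofReal (3 ^ n * R ^ ((n : ℝ) / 2)) := by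
        gcongr; exact tsum_ite_bracketSq_le_one_le n R
    _ = _ := by
        rw [← ENNReal.ofReal_mul (by positivity)]
        congr 2
        rw [Real.div_rpow (by linarith) zero_le_two, Real.rpow_add (by linarith)]
        simp only [K, Real.rpow_neg zero_le_two]
        ring

theorem exists_tsum_sq_ite_jweight_le (n : ℕ) {a b : ℝ} (ha : a < 0) (hb : b < 0)
    (hab : a + b = -(n : ℝ) / 2) :
    ∃ D : ℝ, 0 < D ∧ ∀ η : Fin n → ℤ, ∑' ν : Fin n → ℤ,
      (if bracketSq n ν ≤ bracketSq n η then jweight n a ν * jweight n b η else 0) ^ 2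
        ≤ ENNReal.ofReal D := by
  obtain ⟨D, hD, h_sum⟩ := exists_tsum_ite_bracketSq_rpow_le n ha.le (by linarith)
  refine ⟨D, hD, fun η => ?_⟩
  have hη : 0 < bracketSq n η := one_pos.trans_le (one_le_bracketSq n η)
  calc _ = (∑' ν : Fin n → ℤ, if bracketSq n ν ≤ bracketSq n η
          then ENNReal.ofReal (bracketSq n ν ^ a) else 0) * ENNReal.ofReal (bracketSq n η ^ b) := by
        rw [← ENNReal.tsum_mul_right]
        refine tsum_congr fun ν => ?_
        split_ifs <;> simp [mul_pow, jweight_sq]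
    _ ≤ ENNReal.ofReal (D * bracketSq n η ^ (a + n / 2)) * ENNReal.ofReal (bracketSq n η ^ b) := by
        gcongr; exact h_sum _
    _ = ENNReal.ofReal D := by
        rw [← ENNReal.ofReal_mul (by positivity), mul_assoc, ← Real.rpow_add hη,
          show a + n / 2 + b = 0 by linarith, Real.rpow_zero, mul_one]

theorem stmt_0_general (n : ℕ) (a₁ a₂ : ℝ) (h₁ : a₁ < 0) (h₂ : a₂ < 0)
    (hsum : a₁ + a₂ = -(n : ℝ) / 2) :
    ∃ C : ℝ≥0∞, 0 < C ∧ C < ⊤ ∧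
      ∀ A₁ A₂ : (Fin n → ℤ) → ℝ≥0∞,
        (∑' μ : Fin n → ℤ,
            (∑' ν : Fin n → ℤ,
              jweight n a₁ ν * jweight n a₂ (μ - ν) * A₁ ν * A₂ (μ - ν)) ^ 2) ^ (1/2 : ℝ)
          ≤ C * (∑' ν, (A₁ ν) ^ 2) ^ (1/2 : ℝ) * (∑' ν, (A₂ ν) ^ 2) ^ (1/2 : ℝ) := by
  obtain ⟨D₁, hD₁, h_low⟩ := exists_tsum_sq_ite_jweight_le n h₁ h₂ hsum
  obtain ⟨D₂, hD₂, h_high⟩ := exists_tsum_sq_ite_jweight_le n h₂ h₁ (by linarith)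
  set M : ℝ≥0∞ := 2 * (ENNReal.ofReal D₁ + ENNReal.ofReal D₂)
  have hM₀ : 0 < M := by positivity
  have hM : M ≠ ⊤ := by finiteness
  refine ⟨M ^ (1 / 2 : ℝ), ENNReal.rpow_pos hM₀ hM,
    ENNReal.rpow_lt_top_of_nonneg (by norm_num) hM, fun A₁ A₂ => ?_⟩
  have h_split : (fun ν η => jweight n a₁ ν * jweight n a₂ η) ≤
      (fun ν η => if bracketSq n ν ≤ bracketSq n η then jweight n a₁ ν * jweight n a₂ η else 0) +
      (fun ν η => if bracketSq n η ≤ bracketSq n ν then jweight n a₂ η * jweight n a₁ ν else 0) :=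
    fun ν η => by
      simp only [Pi.add_apply]
      rcases le_total (bracketSq n ν) (bracketSq n η) with h | h
      · rw [if_pos h]; exact le_self_add
      · rw [if_pos h, mul_comm]; exact le_add_self
  calc _ ≤ (M * (∑' ν, A₁ ν ^ 2) * ∑' ν, A₂ ν ^ 2) ^ (1 / 2 : ℝ) :=
        ENNReal.rpow_le_rpow (tsum_sq_kernelConv_le h_split h_low h_high A₁ A₂) (by norm_num)
    _ = _ := by rw [ENNReal.mul_rpow_of_nonneg _ _ (by norm_num),
          ENNReal.mul_rpow_of_nonneg _ _ (by norm_num)]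

theorem stmt_0 (n : ℕ) (hn : 1 ≤ n) (a₁ a₂ : ℝ) (h₁ : a₁ < 0) (h₂ : a₂ < 0)
    (hsum : a₁ + a₂ = -(n : ℝ) / 2) :
    ∃ C : ℝ≥0∞, 0 < C ∧ C < ⊤ ∧
      ∀ A₁ A₂ : (Fin n → ℤ) → ℝ≥0∞,
        (∑' μ : Fin n → ℤ,
            (∑' ν : Fin n → ℤ,
              jweight n a₁ ν * jweight n a₂ (μ - ν) * A₁ ν * A₂ (μ - ν)) ^ 2) ^ (1/2 : ℝ)
          ≤ C * (∑' ν, (A₁ ν) ^ 2) ^ (1/2 : ℝ) * (∑' ν, (A₂ ν) ^ 2) ^ (1/2 : ℝ) :=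
  stmt_0_general n a₁ a₂ h₁ h₂ hsum
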